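/- arXiv:1810.01120 — 2 statements merged into one kernel-verified Lean document; each statement's English description precedes it below -/
import Mathlib

section
/- Let L be an e-cyclic residuated lattice, let S ⊆ L, and let M be the submonoid of (L, ·, e) generated by |S| = {|s| : s ∈ S}. Then C[S] = C[|S|] = {x ∈ L : h ≤ x ≤ h\e for some h ∈ M} = {x ∈ L : h ≤ |x| for some h ∈ M}. In particular, the set {x ∈ L : h ≤ x ≤ h\e for some h ∈ M} is a convex subalgebra of L that contains S and is contained in every convex subalgebra of L containing S. -/
universe u

/-- A residuated lattice: a lattice-ordered monoid with left and right residuals.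
`ldiv x z` is `x \ z` and `rdiv z y` is `z / y`. -/
class ResiduatedLattice (α : Type u) extends Lattice α, Monoid α where
  ldiv : α → α → α
  rdiv : α → α → α
  mul_le_iff_le_ldiv : ∀ x y z : α, x * y ≤ z ↔ y ≤ ldiv x z
  mul_le_iff_le_rdiv : ∀ x y z : α, x * y ≤ z ↔ x ≤ rdiv z y

namespace ResiduatedLattice

variable {α : Type u} [ResiduatedLattice α]

/-- `L` is e-cyclic if `x \ e = e / x` for all `x`. -/
def ECyclic (α : Type u) [ResiduatedLattice α] : Prop :=
  ∀ x : α, ldiv x 1 = rdiv 1 x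

/-- Absolute value: `|x| = x ⊓ (e / x) ⊓ e`. -/
def absv (x : α) : α := x ⊓ rdiv 1 x ⊓ 1

/-- A convex subalgebra: contains `e`, closed under all the operations, and order-convex. -/
structure IsConvexSubalgebra (H : Set α) : Prop where
  one_mem : (1 : α) ∈ H
  mul_mem : ∀ ⦃x⦄, x ∈ H → ∀ ⦃y⦄, y ∈ H → x * y ∈ H
  sup_mem : ∀ ⦃x⦄, x ∈ H → ∀ ⦃y⦄, y ∈ H → x ⊔ y ∈ H
  inf_mem : ∀ ⦃x⦄, x ∈ H → ∀ ⦃y⦄, y ∈ H → x ⊓ y ∈ H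
  ldiv_mem : ∀ ⦃x⦄, x ∈ H → ∀ ⦃y⦄, y ∈ H → ldiv x y ∈ H
  rdiv_mem : ∀ ⦃x⦄, x ∈ H → ∀ ⦃y⦄, y ∈ H → rdiv x y ∈ H
  convex : ∀ ⦃a⦄, a ∈ H → ∀ ⦃b⦄, b ∈ H → ∀ ⦃x⦄, a ≤ x → x ≤ b → x ∈ H

/-- `C[S]`: the smallest convex subalgebra containing `S`. -/
def convexClosure (S : Set α) : Set α :=
  ⋂₀ {H : Set α | IsConvexSubalgebra H ∧ S ⊆ H}

end ResiduatedLattice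

open ResiduatedLattice

/-!
Let `T = intervalSpan M` be the union of the intervals `[h, h \ e]`, `h ∈ M`. Every `h ∈ M` is
negative, the interval `[h, h \ e]` grows as `h` decreases, and `g * h` lies below both `g` and
`h`; so any two elements of `T` lie in one interval `[g, g \ e]` with `g ∈ M` negative. Each
operation maps that interval into `[g * g, (g * g) \ e]`, where e-cyclicity is what allows
turning `g * x ≤ e` into `x * g ≤ e`. Hence `T` is a convex subalgebra. It contains `S` since
`|s| ≤ s ≤ |s| \ e`, and a convex subalgebra containing `|S|` contains `M`, hence every interval
`[h, h \ e]`, hence `T`. For negative `h`, `h ≤ |x|` says exactly `h ≤ x ≤ h \ e`.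
-/

theorem Submonoid.le_one_of_mem_closure {β : Type*} [Monoid β] [Preorder β] [MulLeftMono β]
    {s : Set β} (hs : ∀ x ∈ s, x ≤ 1) {a : β} (ha : a ∈ Submonoid.closure s) : a ≤ 1 := by
  induction ha using Submonoid.closure_induction with
  | mem x hx => exact hs x hx
  | one => exact le_rfl
  | mul x y _ _ hx hy => exact mul_le_one' hx hy

namespace ResiduatedLattice

open Set

variable {α : Type u} [ResiduatedLattice α]

theorem le_ldiv_iff {x y z : α} : y ≤ ldiv x z ↔ x * y ≤ z := (mul_le_iff_le_ldiv x y z).symm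

theorem le_rdiv_iff {x y z : α} : x ≤ rdiv z y ↔ x * y ≤ z := (mul_le_iff_le_rdiv x y z).symm

theorem mul_ldiv_le (x y : α) : x * ldiv x y ≤ y := le_ldiv_iff.mp le_rfl

theorem rdiv_mul_le (x y : α) : rdiv x y * y ≤ x := le_rdiv_iff.mp le_rfl

instance : MulLeftMono α :=
  ⟨fun _ _ _ hbc => le_ldiv_iff.mp (hbc.trans (le_ldiv_iff.mpr le_rfl))⟩

instance : MulRightMono α :=
  ⟨fun _ _ _ hbc => le_rdiv_iff.mp (hbc.trans (le_rdiv_iff.mpr le_rfl))⟩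

theorem ldiv_le_ldiv_left {g h : α} (hgh : g ≤ h) (z : α) : ldiv h z ≤ ldiv g z :=
  le_ldiv_iff.mpr ((mul_le_mul_left hgh _).trans (mul_ldiv_le h z))

theorem mul_le_one_comm (hec : ECyclic α) {a b : α} : a * b ≤ 1 ↔ b * a ≤ 1 := by
  rw [mul_le_iff_le_ldiv, hec a, ← mul_le_iff_le_rdiv]

theorem absv_le_one (x : α) : absv x ≤ 1 := inf_le_right

theorem le_absv_iff {g x : α} (hg : g ≤ 1) : g ≤ absv x ↔ g ≤ x ∧ x ≤ ldiv g 1 := by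
  simp only [absv, le_inf_iff, le_rdiv_iff, le_ldiv_iff, hg, and_true]

theorem IsConvexSubalgebra.image_absv_subset {H S : Set α} (hH : IsConvexSubalgebra H)
    (hSH : S ⊆ H) : absv '' S ⊆ H := by
  rintro _ ⟨x, hx, rfl⟩
  exact hH.inf_mem (hH.inf_mem (hSH hx) (hH.rdiv_mem hH.one_mem (hSH hx))) hH.one_mem

def IsConvexSubalgebra.toSubmonoid {H : Set α} (hH : IsConvexSubalgebra H) : Submonoid α where
  carrier := H
  mul_mem' hx hy := hH.mul_mem hx hy
  one_mem' := hH.one_mem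

theorem IsConvexSubalgebra.Icc_ldiv_one_subset {H : Set α} (hH : IsConvexSubalgebra H) {g : α}
    (hg : g ∈ H) : Icc g (ldiv g 1) ⊆ H :=
  fun _ hx => hH.convex hg (hH.ldiv_mem hg hH.one_mem) hx.1 hx.2

theorem convexClosure_eq_of_isLeast {S T : Set α}
    (hT : IsLeast {H : Set α | IsConvexSubalgebra H ∧ S ⊆ H} T) : convexClosure S = T :=
  hT.isGLB.sInf_eq

theorem Icc_ldiv_one_subset_of_le {g h : α} (hgh : g ≤ h) : Icc h (ldiv h 1) ⊆ Icc g (ldiv g 1) :=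
  Icc_subset_Icc hgh (ldiv_le_ldiv_left hgh 1)

section Interval

variable {g x y : α}

theorem mul_le_one_of_mem_Icc_ldiv_one (hx : x ∈ Icc g (ldiv g 1)) : g * x ≤ 1 :=
  le_ldiv_iff.mp hx.2

theorem mem_Icc_ldiv_one_iff : x ∈ Icc g (ldiv g 1) ↔ g ≤ x ∧ g * x ≤ 1 := by
  rw [mem_Icc, le_ldiv_iff]

variable (hec : ECyclic α) (hx : x ∈ Icc g (ldiv g 1)) (hy : y ∈ Icc g (ldiv g 1))
include hx hy

theorem mul_mem_Icc_ldiv_one : x * y ∈ Icc (g * g) (ldiv (g * g) 1) := by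
  refine mem_Icc_ldiv_one_iff.mpr ⟨mul_le_mul' hx.1 hy.1, ?_⟩
  calc g * g * (x * y) = g * (g * x) * y := by simp only [mul_assoc]
    _ ≤ g * 1 * y := by gcongr; exact mul_le_one_of_mem_Icc_ldiv_one hx
    _ ≤ 1 := by rw [mul_one]; exact mul_le_one_of_mem_Icc_ldiv_one hy

include hec in
theorem ldiv_mem_Icc_ldiv_one : ldiv x y ∈ Icc (g * g) (ldiv (g * g) 1) := by
  refine mem_Icc_ldiv_one_iff.mpr ⟨le_ldiv_iff.mpr ?_, ?_⟩
  · calc x * (g * g) = x * g * g := (mul_assoc _ _ _).symm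
      _ ≤ 1 * g := mul_le_mul_left ((mul_le_one_comm hec).mp
          (mul_le_one_of_mem_Icc_ldiv_one hx)) g
      _ ≤ y := by rw [one_mul]; exact hy.1
  · calc g * g * ldiv x y ≤ g * (x * ldiv x y) := by
          rw [mul_assoc]; exact mul_le_mul_right (mul_le_mul_left hx.1 _) g
      _ ≤ g * y := mul_le_mul_right (mul_ldiv_le x y) g
      _ ≤ 1 := mul_le_one_of_mem_Icc_ldiv_one hy

include hec in
theorem rdiv_mem_Icc_ldiv_one : rdiv x y ∈ Icc (g * g) (ldiv (g * g) 1) := by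
  refine mem_Icc_ldiv_one_iff.mpr ⟨le_rdiv_iff.mpr ?_, (mul_le_one_comm hec).mpr ?_⟩
  · calc g * g * y = g * (g * y) := mul_assoc _ _ _
      _ ≤ g * 1 := mul_le_mul_right (mul_le_one_of_mem_Icc_ldiv_one hy) g
      _ ≤ x := by rw [mul_one]; exact hx.1
  · calc rdiv x y * (g * g) = rdiv x y * g * g := (mul_assoc _ _ _).symm
      _ ≤ rdiv x y * y * g := mul_le_mul_left (mul_le_mul_right hy.1 _) g
      _ ≤ x * g := mul_le_mul_left (rdiv_mul_le x y) g
      _ ≤ 1 := (mul_le_one_comm hec).mp (mul_le_one_of_mem_Icc_ldiv_one hx)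

theorem sup_mem_Icc_ldiv_one (hg : g ≤ 1) : x ⊔ y ∈ Icc (g * g) (ldiv (g * g) 1) :=
  Icc_ldiv_one_subset_of_le (mul_le_of_le_one_left' hg) ⟨le_sup_of_le_left hx.1, sup_le hx.2 hy.2⟩

theorem inf_mem_Icc_ldiv_one (hg : g ≤ 1) : x ⊓ y ∈ Icc (g * g) (ldiv (g * g) 1) :=
  Icc_ldiv_one_subset_of_le (mul_le_of_le_one_left' hg) ⟨le_inf hx.1 hy.1, inf_le_of_left_le hx.2⟩

end Interval

variable (M : Submonoid α)

def intervalSpan : Set α := {x : α | ∃ h ∈ M, h ≤ x ∧ x ≤ ldiv h 1}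

variable {M}

theorem mem_intervalSpan {x : α} : x ∈ intervalSpan M ↔ ∃ g ∈ M, x ∈ Icc g (ldiv g 1) :=
  Iff.rfl

theorem mem_intervalSpan_iff_exists_le_absv (hM : ∀ g ∈ M, g ≤ 1) {x : α} :
    x ∈ intervalSpan M ↔ ∃ g ∈ M, g ≤ absv x := by
  simp only [mem_intervalSpan, mem_Icc]
  exact exists_congr fun g => and_congr_right fun hg => (le_absv_iff (hM g hg)).symm

theorem intervalSpan_subset {M : Submonoid α} {H : Set α} (hH : IsConvexSubalgebra H)
    (hMH : ∀ g ∈ M, g ∈ H) : intervalSpan M ⊆ H := by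
  rintro x ⟨g, hg, hx⟩
  exact hH.Icc_ldiv_one_subset (hMH g hg) hx

theorem exists_mem_Icc_ldiv_one_of_mem_intervalSpan (hM : ∀ g ∈ M, g ≤ 1) {x y : α}
    (hx : x ∈ intervalSpan M) (hy : y ∈ intervalSpan M) :
    ∃ g ∈ M, g ≤ 1 ∧ x ∈ Icc g (ldiv g 1) ∧ y ∈ Icc g (ldiv g 1) := by
  obtain ⟨g, hgM, hxg⟩ := hx
  obtain ⟨h, hhM, hyh⟩ := hy
  refine ⟨g * h, M.mul_mem hgM hhM, mul_le_one' (hM g hgM) (hM h hhM), ?_, ?_⟩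
  · exact Icc_ldiv_one_subset_of_le (mul_le_of_le_one_right' (hM h hhM)) hxg
  · exact Icc_ldiv_one_subset_of_le (mul_le_of_le_one_left' (hM g hgM)) hyh

theorem map₂_mem_intervalSpan (hM : ∀ g ∈ M, g ≤ 1) {f : α → α → α}
    (hf : ∀ g : α, g ≤ 1 → ∀ x ∈ Icc g (ldiv g 1), ∀ y ∈ Icc g (ldiv g 1),
      f x y ∈ Icc (g * g) (ldiv (g * g) 1))
    {x y : α} (hx : x ∈ intervalSpan M) (hy : y ∈ intervalSpan M) :
    f x y ∈ intervalSpan M := by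
  obtain ⟨g, hgM, hg, hxg, hyg⟩ := exists_mem_Icc_ldiv_one_of_mem_intervalSpan hM hx hy
  exact ⟨g * g, M.mul_mem hgM hgM, hf g hg x hxg y hyg⟩

theorem isConvexSubalgebra_intervalSpan (hec : ECyclic α) (hM : ∀ g ∈ M, g ≤ 1) :
    IsConvexSubalgebra (intervalSpan M) where
  one_mem := ⟨1, M.one_mem, le_rfl, le_ldiv_iff.mpr (mul_one 1).le⟩
  mul_mem _ hx _ hy := map₂_mem_intervalSpan hM
    (fun _ _ _ hx _ hy => mul_mem_Icc_ldiv_one hx hy) hx hy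
  sup_mem _ hx _ hy := map₂_mem_intervalSpan hM
    (fun _ hg _ hx _ hy => sup_mem_Icc_ldiv_one hx hy hg) hx hy
  inf_mem _ hx _ hy := map₂_mem_intervalSpan hM
    (fun _ hg _ hx _ hy => inf_mem_Icc_ldiv_one hx hy hg) hx hy
  ldiv_mem _ hx _ hy := map₂_mem_intervalSpan hM
    (fun _ _ _ hx _ hy => ldiv_mem_Icc_ldiv_one hec hx hy) hx hy
  rdiv_mem _ hx _ hy := map₂_mem_intervalSpan hM
    (fun _ _ _ hx _ hy => rdiv_mem_Icc_ldiv_one hec hx hy) hx hy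
  convex a ha b hb x hax hxb := by
    obtain ⟨g, hgM, -, hag, hbg⟩ := exists_mem_Icc_ldiv_one_of_mem_intervalSpan hM ha hb
    exact ⟨g, hgM, hag.1.trans hax, hxb.trans hbg.2⟩

end ResiduatedLattice

/-- description of the convex subalgebra generated by a set `S` in an
e-cyclic residuated lattice, via the submonoid `M` generated by `|S|`. -/
theorem stmt0 {α : Type u} [ResiduatedLattice α] (hec : ECyclic α) (S : Set α)
    (M : Submonoid α) (hM : M = Submonoid.closure (absv '' S)) :
    convexClosure S = convexClosure (absv '' S) ∧
    convexClosure S = {x : α | ∃ h ∈ M, h ≤ x ∧ x ≤ ldiv h 1} ∧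
    convexClosure S = {x : α | ∃ h ∈ M, h ≤ absv x} ∧
    IsConvexSubalgebra {x : α | ∃ h ∈ M, h ≤ x ∧ x ≤ ldiv h 1} ∧
    S ⊆ {x : α | ∃ h ∈ M, h ≤ x ∧ x ≤ ldiv h 1} ∧
    ∀ H : Set α, IsConvexSubalgebra H → S ⊆ H →
      {x : α | ∃ h ∈ M, h ≤ x ∧ x ≤ ldiv h 1} ⊆ H := by
  have hgen : absv '' S ⊆ M := hM ▸ Submonoid.subset_closure
  have hneg : ∀ g ∈ M, g ≤ 1 := fun _ hg =>
    Submonoid.le_one_of_mem_closure (by rintro _ ⟨s, -, rfl⟩; exact absv_le_one s) (hM ▸ hg)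
  have hconv := isConvexSubalgebra_intervalSpan hec hneg
  have hS_sub : S ⊆ intervalSpan M := fun s hs =>
    (mem_intervalSpan_iff_exists_le_absv hneg).mpr ⟨_, hgen ⟨s, hs, rfl⟩, le_rfl⟩
  have hmin_abs : ∀ H : Set α, IsConvexSubalgebra H → absv '' S ⊆ H → intervalSpan M ⊆ H :=
    fun H hH hSH => intervalSpan_subset hH fun _ hg =>
      (Submonoid.closure_le (S := hH.toSubmonoid)).mpr hSH (hM ▸ hg)
  have hmin : ∀ H : Set α, IsConvexSubalgebra H → S ⊆ H → intervalSpan M ⊆ H :=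
    fun H hH hSH => hmin_abs H hH (hH.image_absv_subset hSH)
  have hS : convexClosure S = intervalSpan M :=
    convexClosure_eq_of_isLeast ⟨⟨hconv, hS_sub⟩, fun H hH => hmin H hH.1 hH.2⟩
  have habs : convexClosure (absv '' S) = intervalSpan M :=
    convexClosure_eq_of_isLeast
      ⟨⟨hconv, hconv.image_absv_subset hS_sub⟩, fun H hH => hmin_abs H hH.1 hH.2⟩
  have habsv : intervalSpan M = {x : α | ∃ h ∈ M, h ≤ absv x} :=
    Set.ext fun _ => mem_intervalSpan_iff_exists_le_absv hneg
  exact ⟨hS.trans habs.symm, hS, hS.trans habsv, hconv, hS_sub, hmin⟩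
end

section
/- Let L be an e-cyclic residuated lattice satisfying the left prelinearity law, let a, b ∈ L with a ≤ e and b ≤ e, and set u = (b\a) ∧ e and v = (a\b) ∧ e. Then C[u] ∩ C[v] = {e} and C[C[a] ∪ C[v]] = C[C[a] ∪ C[b]] = C[C[u] ∪ C[b]]. (This verifies Monteiro's condition characterizing relative normality for the lattice of principal convex subalgebras: u, v witness C[u] ∧ C[v] = ⊥ and C[u] ∨ C[b] = C[a] ∨ C[b] = C[a] ∨ C[v].) -/
/-!
For `g ≤ e`, the set of `x` with `gⁿ ≤ |x|` for some `n` is a convex subalgebra (e-cyclicity is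
what makes it closed under the residuals), so every `x ∈ C[g]` has `gⁿ ≤ |x|` for some `n`.
Prelinearity gives `u ∨ v = e`, hence `uⁿ ∨ vᵐ = e` for all `n, m`, so an element of
`C[u] ∩ C[v]` has `e ≤ |x|`, i.e. `x = e`. The joins agree because `a · v ≤ b ≤ e` puts `b` into
`C[{a, v}]`, and symmetrically `b · u ≤ a ≤ e` puts `a` into `C[{b, u}]`.
-/

universe u

open ResiduatedLattice

namespace ResiduatedLattice

variable {α : Type u} [ResiduatedLattice α]

section Monoid

instance inst_s10 : MulLeftMono α where
  elim x _ z h :=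
    (mul_le_iff_le_ldiv x _ (x * z)).mpr (h.trans ((mul_le_iff_le_ldiv x z _).mp le_rfl))

instance inst_s10_2 : MulRightMono α where
  elim x _ z h :=
    (mul_le_iff_le_rdiv _ x (z * x)).mpr (h.trans ((mul_le_iff_le_rdiv z x _).mp le_rfl))

protected theorem mul_sup (x y z : α) : x * (y ⊔ z) = x * y ⊔ x * z :=
  le_antisymm
    ((mul_le_iff_le_ldiv x _ _).mpr <| sup_le
      ((mul_le_iff_le_ldiv x y _).mp le_sup_left) ((mul_le_iff_le_ldiv x z _).mp le_sup_right))
    (sup_le (mul_le_mul_right le_sup_left x) (mul_le_mul_right le_sup_right x))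

protected theorem sup_mul (x y z : α) : (x ⊔ y) * z = x * z ⊔ y * z :=
  le_antisymm
    ((mul_le_iff_le_rdiv _ z _).mpr <| sup_le
      ((mul_le_iff_le_rdiv x z _).mp le_sup_left) ((mul_le_iff_le_rdiv y z _).mp le_sup_right))
    (sup_le (mul_le_mul_left le_sup_left z) (mul_le_mul_left le_sup_right z))

theorem sup_mul_eq_one {x y z : α} (hx : x ≤ 1) (hxy : x ⊔ y = 1) (hxz : x ⊔ z = 1) :
    x ⊔ y * z = 1 := by
  have hy : y ≤ 1 := hxy ▸ le_sup_right
  have hz : z ≤ 1 := hxz ▸ le_sup_right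
  refine le_antisymm (sup_le hx (mul_le_one' hy hz)) ?_
  calc (1 : α) = (x ⊔ y) * (x ⊔ z) := by rw [hxy, hxz, one_mul]
    _ = (x * x ⊔ x * z) ⊔ (y * x ⊔ y * z) := by
      rw [ResiduatedLattice.sup_mul, ResiduatedLattice.mul_sup, ResiduatedLattice.mul_sup]
    _ ≤ x ⊔ y * z :=
      sup_le (sup_le ((mul_le_of_le_one_right' hx).trans le_sup_left)
          ((mul_le_of_le_one_right' hz).trans le_sup_left))
        (sup_le ((mul_le_of_le_one_left' hy).trans le_sup_left) le_sup_right)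

theorem sup_pow_eq_one {x y : α} (hx : x ≤ 1) (hxy : x ⊔ y = 1) : ∀ m : ℕ, x ⊔ y ^ m = 1
  | 0 => by rw [pow_zero, sup_of_le_right hx]
  | m + 1 => by rw [pow_succ]; exact sup_mul_eq_one hx (sup_pow_eq_one hx hxy m) hxy

theorem pow_sup_pow_eq_one {x y : α} (hx : x ≤ 1) (hy : y ≤ 1) (hxy : x ⊔ y = 1) (n m : ℕ) :
    x ^ n ⊔ y ^ m = 1 := by
  rw [sup_comm]
  exact sup_pow_eq_one (pow_le_one' hy m)
    (by rw [sup_comm]; exact sup_pow_eq_one hx hxy m) n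

end Monoid

section AbsoluteValue

theorem absv_le_self (x : α) : absv x ≤ x := inf_le_left.trans inf_le_left

theorem absv_le_rdiv (x : α) : absv x ≤ rdiv 1 x := inf_le_left.trans inf_le_right

theorem le_absv {h x : α} (hx : h ≤ x) (h1 : h ≤ 1) (hmul : h * x ≤ 1) : h ≤ absv x :=
  le_inf (le_inf hx ((mul_le_iff_le_rdiv h x 1).mp hmul)) h1

theorem absv_of_le_one {g : α} (hg : g ≤ 1) : absv g = g :=
  le_antisymm (absv_le_self g) (le_absv le_rfl hg (mul_le_one' hg hg))

theorem eq_one_of_one_le_absv {x : α} (h : 1 ≤ absv x) : x = 1 := by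
  have hx : x ≤ 1 := by simpa using (mul_le_iff_le_rdiv 1 x 1).mpr (h.trans (absv_le_rdiv x))
  exact le_antisymm hx (h.trans (absv_le_self x))

theorem mul_le_one_of_le_absv {h x : α} (hx : h ≤ absv x) : h * x ≤ 1 :=
  (mul_le_iff_le_rdiv h x 1).mpr (hx.trans (absv_le_rdiv x))

theorem mul_le_one_of_le_absv' (hec : ECyclic α) {h x : α} (hx : h ≤ absv x) : x * h ≤ 1 :=
  (mul_le_iff_le_ldiv x h 1).mpr ((hx.trans (absv_le_rdiv x)).trans (hec x).ge)

variable {h x y : α}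

theorem mul_self_le_absv_mul (h1 : h ≤ 1) (hx : h ≤ absv x) (hy : h ≤ absv y) :
    h * h ≤ absv (x * y) := by
  refine le_absv (mul_le_mul' (hx.trans (absv_le_self x)) (hy.trans (absv_le_self y)))
    (mul_le_one' h1 h1) ?_
  calc h * h * (x * y) = h * (h * x * y) := by simp only [mul_assoc]
    _ ≤ h * y := mul_le_mul_right (mul_le_of_le_one_left' (mul_le_one_of_le_absv hx)) h
    _ ≤ 1 := mul_le_one_of_le_absv hy

theorem le_absv_sup (h1 : h ≤ 1) (hx : h ≤ absv x) (hy : h ≤ absv y) : h ≤ absv (x ⊔ y) := by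
  refine le_absv ((hx.trans (absv_le_self x)).trans le_sup_left) h1 ?_
  rw [ResiduatedLattice.mul_sup]
  exact sup_le (mul_le_one_of_le_absv hx) (mul_le_one_of_le_absv hy)

theorem le_absv_inf (h1 : h ≤ 1) (hx : h ≤ absv x) (hy : h ≤ absv y) : h ≤ absv (x ⊓ y) :=
  le_absv (le_inf (hx.trans (absv_le_self x)) (hy.trans (absv_le_self y))) h1
    ((mul_le_mul_right inf_le_left h).trans (mul_le_one_of_le_absv hx))

theorem le_absv_of_le_of_le {p q : α} (h1 : h ≤ 1) (hp : h ≤ absv p) (hq : h ≤ absv q)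
    (hpx : p ≤ x) (hxq : x ≤ q) : h ≤ absv x :=
  le_absv ((hp.trans (absv_le_self p)).trans hpx) h1
    ((mul_le_mul_right hxq h).trans (mul_le_one_of_le_absv hq))

theorem mul_self_le_absv_ldiv (hec : ECyclic α) (h1 : h ≤ 1) (hx : h ≤ absv x)
    (hy : h ≤ absv y) : h * h ≤ absv (ldiv x y) := by
  have hxh : x * h ≤ 1 := mul_le_one_of_le_absv' hec hx
  refine le_absv ((mul_le_iff_le_ldiv x _ y).mp ?_) (mul_le_one' h1 h1) ?_
  · calc x * (h * h) = x * h * h := (mul_assoc x h h).symm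
      _ ≤ h := mul_le_of_le_one_left' hxh
      _ ≤ y := hy.trans (absv_le_self y)
  · calc h * h * ldiv x y = h * (h * ldiv x y) := mul_assoc h h _
      _ ≤ h * (x * ldiv x y) :=
        mul_le_mul_right (mul_le_mul_left (hx.trans (absv_le_self x)) _) h
      _ ≤ h * y := mul_le_mul_right ((mul_le_iff_le_ldiv x _ y).mpr le_rfl) h
      _ ≤ 1 := mul_le_one_of_le_absv hy

theorem mul_self_le_absv_rdiv (hec : ECyclic α) (h1 : h ≤ 1) (hx : h ≤ absv x)
    (hy : h ≤ absv y) : h * h ≤ absv (rdiv x y) := by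
  refine le_absv ((mul_le_iff_le_rdiv _ y x).mp ?_) (mul_le_one' h1 h1) ?_
  · calc h * h * y = h * (h * y) := mul_assoc h h y
      _ ≤ h := mul_le_of_le_one_right' (mul_le_one_of_le_absv hy)
      _ ≤ x := hx.trans (absv_le_self x)
  · have hdiv : h * rdiv x y ≤ rdiv 1 y := by
      refine (mul_le_iff_le_rdiv _ y 1).mp ?_
      calc h * rdiv x y * y = h * (rdiv x y * y) := mul_assoc _ _ _
        _ ≤ h * x := mul_le_mul_right ((mul_le_iff_le_rdiv _ y x).mpr le_rfl) h
        _ ≤ 1 := mul_le_one_of_le_absv hx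
    calc h * h * rdiv x y = h * (h * rdiv x y) := mul_assoc _ _ _
      _ ≤ y * rdiv 1 y := mul_le_mul' (hy.trans (absv_le_self y)) hdiv
      _ ≤ 1 := (mul_le_iff_le_ldiv y _ 1).mpr (hec y).ge

end AbsoluteValue

section ConvexClosure

theorem mem_convexClosure {S : Set α} {x : α} :
    x ∈ convexClosure S ↔ ∀ H : Set α, IsConvexSubalgebra H → S ⊆ H → x ∈ H := by
  simp [convexClosure, Set.mem_sInter, and_imp]

theorem subset_convexClosure (S : Set α) : S ⊆ convexClosure S := fun _ hx =>
  mem_convexClosure.mpr fun _ _ hS => hS hx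

theorem convexClosure_subset {S H : Set α} (hH : IsConvexSubalgebra H) (hS : S ⊆ H) :
    convexClosure S ⊆ H := fun _ hx => mem_convexClosure.mp hx H hH hS

theorem convexClosure_mono {S T : Set α} (h : S ⊆ T) : convexClosure S ⊆ convexClosure T :=
  fun _ hx => mem_convexClosure.mpr fun H hH hT => mem_convexClosure.mp hx H hH (h.trans hT)

theorem isConvexSubalgebra_convexClosure (S : Set α) :
    IsConvexSubalgebra (convexClosure S) where
  one_mem := mem_convexClosure.mpr fun _ hH _ => hH.one_mem
  mul_mem _ hx _ hy := mem_convexClosure.mpr fun H hH hS =>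
    hH.mul_mem (mem_convexClosure.mp hx H hH hS) (mem_convexClosure.mp hy H hH hS)
  sup_mem _ hx _ hy := mem_convexClosure.mpr fun H hH hS =>
    hH.sup_mem (mem_convexClosure.mp hx H hH hS) (mem_convexClosure.mp hy H hH hS)
  inf_mem _ hx _ hy := mem_convexClosure.mpr fun H hH hS =>
    hH.inf_mem (mem_convexClosure.mp hx H hH hS) (mem_convexClosure.mp hy H hH hS)
  ldiv_mem _ hx _ hy := mem_convexClosure.mpr fun H hH hS =>
    hH.ldiv_mem (mem_convexClosure.mp hx H hH hS) (mem_convexClosure.mp hy H hH hS)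
  rdiv_mem _ hx _ hy := mem_convexClosure.mpr fun H hH hS =>
    hH.rdiv_mem (mem_convexClosure.mp hx H hH hS) (mem_convexClosure.mp hy H hH hS)
  convex _ hp _ hq _ hpx hxq := mem_convexClosure.mpr fun H hH hS =>
    hH.convex (mem_convexClosure.mp hp H hH hS) (mem_convexClosure.mp hq H hH hS) hpx hxq

theorem convexClosure_union_convexClosure (S T : Set α) :
    convexClosure (convexClosure S ∪ convexClosure T) = convexClosure (S ∪ T) :=
  le_antisymm
    (convexClosure_subset (isConvexSubalgebra_convexClosure _)
      (Set.union_subset (convexClosure_mono Set.subset_union_left)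
        (convexClosure_mono Set.subset_union_right)))
    (convexClosure_mono (Set.union_subset_union (subset_convexClosure S) (subset_convexClosure T)))

theorem convexClosure_pair_ldiv_inf_one (x : α) {y : α} (hy : y ≤ 1) :
    convexClosure {x, ldiv x y ⊓ 1} = convexClosure {x, y} := by
  have hxy := isConvexSubalgebra_convexClosure ({x, y} : Set α)
  have hxw := isConvexSubalgebra_convexClosure ({x, ldiv x y ⊓ 1} : Set α)
  have hx_xy : x ∈ convexClosure {x, y} := subset_convexClosure _ (Set.mem_insert x _)
  have hy_xy : y ∈ convexClosure {x, y} := subset_convexClosure _ (Set.mem_insert_of_mem x rfl)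
  have hx_xw : x ∈ convexClosure {x, ldiv x y ⊓ 1} := subset_convexClosure _ (Set.mem_insert x _)
  have hw_xw : ldiv x y ⊓ 1 ∈ convexClosure {x, ldiv x y ⊓ 1} :=
    subset_convexClosure _ (Set.mem_insert_of_mem x rfl)
  apply le_antisymm
  · exact convexClosure_subset hxy
      (Set.pair_subset hx_xy (hxy.inf_mem (hxy.ldiv_mem hx_xy hy_xy) hxy.one_mem))
  · have hmul : x * (ldiv x y ⊓ 1) ≤ y := (mul_le_iff_le_ldiv x _ y).mpr inf_le_left
    exact convexClosure_subset hxw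
      (Set.pair_subset hx_xw (hxw.convex (hxw.mul_mem hx_xw hw_xw) hxw.one_mem hmul hy))

end ConvexClosure

theorem isConvexSubalgebra_setOf_pow_le_absv (hec : ECyclic α) {g : α} (hg : g ≤ 1) :
    IsConvexSubalgebra {x : α | ∃ n : ℕ, g ^ n ≤ absv x} := by
  set S := {x : α | ∃ n : ℕ, g ^ n ≤ absv x}
  have of_mul_self_le : ∀ {x y z : α}, x ∈ S → y ∈ S →
      (∀ h ≤ 1, h ≤ absv x → h ≤ absv y → h * h ≤ absv z) → z ∈ S := by
    rintro x y z ⟨n, hx⟩ ⟨m, hy⟩ H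
    refine ⟨(n + m) * 2, ?_⟩
    rw [pow_mul, sq]
    exact H _ (pow_le_one' hg _)
      ((pow_le_pow_right_of_le_one' hg (Nat.le_add_right n m)).trans hx)
      ((pow_le_pow_right_of_le_one' hg (Nat.le_add_left m n)).trans hy)
  have of_le : ∀ {x y z : α}, x ∈ S → y ∈ S →
      (∀ h ≤ 1, h ≤ absv x → h ≤ absv y → h ≤ absv z) → z ∈ S :=
    fun hx hy H => of_mul_self_le hx hy fun h h1 hhx hhy =>
      (mul_le_of_le_one_left' h1).trans (H h h1 hhx hhy)
  exact
    { one_mem := ⟨0, by rw [pow_zero, absv_of_le_one le_rfl]⟩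
      mul_mem := fun _ hx _ hy => of_mul_self_le hx hy fun _ => mul_self_le_absv_mul
      sup_mem := fun _ hx _ hy => of_le hx hy fun _ => le_absv_sup
      inf_mem := fun _ hx _ hy => of_le hx hy fun _ => le_absv_inf
      ldiv_mem := fun _ hx _ hy => of_mul_self_le hx hy fun _ => mul_self_le_absv_ldiv hec
      rdiv_mem := fun _ hx _ hy => of_mul_self_le hx hy fun _ => mul_self_le_absv_rdiv hec
      convex := fun _ hp _ hq _ hpx hxq =>
        of_le hp hq fun _ h1 hhp hhq => le_absv_of_le_of_le h1 hhp hhq hpx hxq }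

theorem exists_pow_le_absv_of_mem_convexClosure (hec : ECyclic α) {g : α} (hg : g ≤ 1) {x : α}
    (hx : x ∈ convexClosure {g}) :
    ∃ n : ℕ, g ^ n ≤ absv x :=
  convexClosure_subset (isConvexSubalgebra_setOf_pow_le_absv hec hg)
    (Set.singleton_subset_iff.mpr ⟨1, by rw [pow_one, absv_of_le_one hg]⟩) hx

theorem convexClosure_inter_eq_one_of_sup_eq_one (hec : ECyclic α) {u v : α} (hu : u ≤ 1)
    (hv : v ≤ 1) (huv : u ⊔ v = 1) : convexClosure {u} ∩ convexClosure {v} = {1} := by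
  refine Set.eq_singleton_iff_unique_mem.mpr
    ⟨⟨(isConvexSubalgebra_convexClosure _).one_mem, (isConvexSubalgebra_convexClosure _).one_mem⟩,
      fun x ⟨hxu, hxv⟩ => ?_⟩
  obtain ⟨n, hn⟩ := exists_pow_le_absv_of_mem_convexClosure hec hu hxu
  obtain ⟨m, hm⟩ := exists_pow_le_absv_of_mem_convexClosure hec hv hxv
  exact eq_one_of_one_le_absv (pow_sup_pow_eq_one hu hv huv n m ▸ sup_le hn hm)

end ResiduatedLattice

/-- Monteiro's condition for the principal convex subalgebras. -/
theorem stmt10 {α : Type u} [ResiduatedLattice α] (hec : ECyclic α)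
    (hpre : ∀ x y : α, (ldiv x y ⊓ 1) ⊔ (ldiv y x ⊓ 1) = 1)
    (a b : α) (ha : a ≤ 1) (hb : b ≤ 1)
    (u v : α) (hu : u = ldiv b a ⊓ 1) (hv : v = ldiv a b ⊓ 1) :
    convexClosure {u} ∩ convexClosure {v} = {1} ∧
    convexClosure (convexClosure {a} ∪ convexClosure {v}) =
      convexClosure (convexClosure {a} ∪ convexClosure {b}) ∧
    convexClosure (convexClosure {u} ∪ convexClosure {b}) =
      convexClosure (convexClosure {a} ∪ convexClosure {b}) := by
  have huv : u ⊔ v = 1 := by rw [sup_comm, hu, hv]; exact hpre a b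
  refine ⟨convexClosure_inter_eq_one_of_sup_eq_one hec (hu ▸ inf_le_right) (hv ▸ inf_le_right)
    huv, ?_, ?_⟩
  · simp only [convexClosure_union_convexClosure, Set.singleton_union]
    rw [hv, convexClosure_pair_ldiv_inf_one a hb]
  · simp only [convexClosure_union_convexClosure, Set.singleton_union]
    rw [hu, Set.pair_comm, convexClosure_pair_ldiv_inf_one b ha, Set.pair_comm]
end
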